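/- For every real parameter a and every function f : ℝ → ℝ, the function H_a is a first integral of the vortex-plug field V_{a,f}: for every point p ∈ ℝ³, the Fréchet derivative of H_a at p applied to the vector V_{a,f}(p) equals 0. -/

import Mathlib

/-!
Write `ρ = x² + y²`, so `H_a = ρ (ρ + z² + a)` and `dH_a(v)` only sees `x v₁ + y v₂` and `v₃`.
The swirl `f(H_a) · (−y, x, 0)` is tangent to the circles `ρ = const`, so `f` drops out. Along the
meridional part `(−2xz, −2yz, 2(2ρ + z² + a))` one has `ρ' = −2 ∂H_a/∂z` and `z' = 2 ∂H_a/∂ρ`,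
so it is a Hamiltonian field for `H_a` in the `(ρ, z)` plane.
-/

noncomputable def Ha3 (a : ℝ) : ℝ × ℝ × ℝ → ℝ :=
  fun p => (p.1 ^ 2 + p.2.1 ^ 2) * (p.1 ^ 2 + p.2.1 ^ 2 + p.2.2 ^ 2 + a)

noncomputable def Vaf (a : ℝ) (f : ℝ → ℝ) : ℝ × ℝ × ℝ → ℝ × ℝ × ℝ :=
  fun p =>
    (-2 * p.1 * p.2.2 - f (Ha3 a p) * p.2.1,
      -2 * p.2.1 * p.2.2 + f (Ha3 a p) * p.1,
      2 * (2 * (p.1 ^ 2 + p.2.1 ^ 2) + p.2.2 ^ 2 + a))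

theorem fderiv_Ha3_apply (a : ℝ) (p v : ℝ × ℝ × ℝ) :
    fderiv ℝ (Ha3 a) p v =
      2 * (2 * (p.1 ^ 2 + p.2.1 ^ 2) + p.2.2 ^ 2 + a) * (p.1 * v.1 + p.2.1 * v.2.1) +
        2 * (p.1 ^ 2 + p.2.1 ^ 2) * p.2.2 * v.2.2 := by
  unfold Ha3
  simp (disch := fun_prop) only [fderiv_fun_mul, fderiv_add_const, fderiv_fun_add, fderiv_fun_pow,
    fderiv.fst, fderiv.snd, fderiv_fun_id, ContinuousLinearMap.comp_id, add_apply, smul_apply,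
    ContinuousLinearMap.comp_apply, ContinuousLinearMap.coe_fst', ContinuousLinearMap.coe_snd',
    smul_add, smul_eq_mul, nsmul_eq_mul, Nat.cast_ofNat]
  ring

/-- For every `a` and every function `f`, the function `H_a` is a first integral of the
vortex-plug field `V_{a,f}`: the Fréchet derivative of `H_a` at any point applied to
`V_{a,f}` at that point vanishes. -/
theorem stmt8 (a : ℝ) (f : ℝ → ℝ) (p : ℝ × ℝ × ℝ) :
    fderiv ℝ (Ha3 a) p (Vaf a f p) = 0 := by
  rw [fderiv_Ha3_apply]
  simp only [Vaf]
  ring
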